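/- arXiv:2002.04363 — 4 statements merged into one kernel-verified Lean document; each statement's English description precedes it below -/
import Mathlib

section
/- Let g : ℝ^p → ℝ^p be a C¹ vector field whose Jacobian ∇g(y) is anti-symmetric at every point y. Then for all y₁, y₂ ∈ ℝ^p, ⟨g(y₁) − g(y₂), y₁ − y₂⟩ = 0. -/
open scoped RealInnerProductSpace

/-- If `g : ℝ^p → ℝ^p` is `C¹` with anti-symmetric Jacobian everywhere, then
`⟨g(y₁) − g(y₂), y₁ − y₂⟩ = 0` for all `y₁, y₂`. -/
theorem antisymmetric_jacobian_orthogonality {p : ℕ}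
    (g : EuclideanSpace ℝ (Fin p) → EuclideanSpace ℝ (Fin p))
    (hg : ContDiff ℝ 1 g)
    (hanti : ∀ y u v : EuclideanSpace ℝ (Fin p),
      ⟪fderiv ℝ g y u, v⟫ = -⟪fderiv ℝ g y v, u⟫) :
    ∀ y₁ y₂ : EuclideanSpace ℝ (Fin p), ⟪g y₁ - g y₂, y₁ - y₂⟫ = 0 := by
  intro y₁ y₂
  set d : EuclideanSpace ℝ (Fin p) := y₁ - y₂ with hd
  have hgdiff : Differentiable ℝ g := hg.differentiable one_ne_zero
  set c : ℝ → EuclideanSpace ℝ (Fin p) := fun t => y₂ + t • d with hc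
  have hcderiv : ∀ t : ℝ, HasDerivAt c d t := by
    intro t
    have : HasDerivAt (fun t : ℝ => t • d) ((1 : ℝ) • d) t :=
      (hasDerivAt_id t).smul_const d
    simpa only [one_smul] using this.const_add y₂
  set f : ℝ → ℝ := fun t => ⟪g (c t), d⟫ with hf
  have hfderiv : ∀ t : ℝ, HasDerivAt f (⟪fderiv ℝ g (c t) d, d⟫) t := by
    intro t
    have h1 : HasDerivAt (fun t => g (c t)) (fderiv ℝ g (c t) d) t :=
      (hgdiff (c t)).hasFDerivAt.comp_hasDerivAt t (hcderiv t)
    have h2 : HasDerivAt (fun t => ⟪d, g (c t)⟫) (⟪d, fderiv ℝ g (c t) d⟫) t :=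
      ((innerSL ℝ d).hasFDerivAt).comp_hasDerivAt t h1
    have heq : f = fun t => ⟪d, g (c t)⟫ := funext fun s => real_inner_comm _ _
    rw [heq, real_inner_comm]
    exact h2
  have hzero : ∀ t : ℝ, ⟪fderiv ℝ g (c t) d, d⟫ = (0 : ℝ) := by
    intro t
    have := hanti (c t) d d
    linarith
  have hconst : f 1 = f 0 := by
    apply is_const_of_deriv_eq_zero
    · intro t; exact (hfderiv t).differentiableAt
    · intro t; rw [(hfderiv t).deriv, hzero]
  have h0 : c 0 = y₂ := by simp [hc]
  have h1 : c 1 = y₁ := by simp [hc, hd]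
  have : ⟪g y₁, d⟫ = ⟪g y₂, d⟫ := by
    simpa [hf, h0, h1] using hconst
  rw [inner_sub_left]
  linarith
end

section
/- Let {w_k} be a sequence of nonnegative reals satisfying w_{k+1} ≤ (1 − c/k)w_k + c₁/k^{s+1} for all k ≥ 1, where c > s > 0 and c₁ > 0. Then w_k ≤ c₁(c − s)^{-1}k^{-s} + o(k^{-s}) as k → ∞. -/
open Filter

-- derivative limit: k * ((1+1/k)^s * (1 - c/k) - 1) → s - c
lemma chung_aux_lim (s c : ℝ) :
    Tendsto (fun k : ℕ => (k : ℝ) * ((1 + 1 / (k:ℝ)) ^ s * (1 - c / (k:ℝ)) - 1)) atTop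
      (nhds (s - c)) := by
  have h1 : HasDerivAt (fun x : ℝ => 1 + x) 1 0 := by
    simpa using (hasDerivAt_id (0:ℝ)).const_add 1
  have h2 : HasDerivAt (fun x : ℝ => (1 + x) ^ s) (s * (1 + 0) ^ (s - 1) * 1) 0 :=
    (Real.hasDerivAt_rpow_const (x := 1 + 0) (p := s) (Or.inl (by norm_num))).comp 0 h1
  have h3 : HasDerivAt (fun x : ℝ => 1 - c * x) (-c) 0 := by
    simpa using ((hasDerivAt_id (0:ℝ)).const_mul c).const_sub 1
  have hd : HasDerivAt (fun x : ℝ => (1 + x) ^ s * (1 - c * x)) (s - c) 0 := by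
    have := h2.mul h3
    exact this.congr_deriv (by simp [Real.one_rpow]; ring)
  rw [hasDerivAt_iff_tendsto_slope] at hd
  have hto : Tendsto (fun k : ℕ => 1 / (k:ℝ)) atTop (nhdsWithin 0 {x : ℝ | x ≠ 0}) := by
    rw [tendsto_nhdsWithin_iff]
    constructor
    · exact tendsto_one_div_atTop_nhds_zero_nat
    · filter_upwards [eventually_ge_atTop 1] with k hk
      have : (0:ℝ) < (k:ℝ) := by exact_mod_cast Nat.pos_of_ne_zero (by omega)
      exact ne_of_gt (one_div_pos.mpr this)
  have := hd.comp hto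
  refine this.congr' ?_
  filter_upwards [eventually_ge_atTop 1] with k hk
  have hk0 : (0:ℝ) < (k:ℝ) := by exact_mod_cast Nat.pos_of_ne_zero (by omega)
  simp only [Function.comp, slope_def_field]
  have hkne : ((k:ℝ)) ≠ 0 := ne_of_gt hk0
  rw [show ((1:ℝ) + 0) ^ s * (1 - c * 0) = 1 by simp [Real.rpow_natCast]]
  rw [sub_zero, div_eq_mul_inv, one_div, inv_inv, mul_comm]
  congr 2

/-- Chung's lemma: if `w_{k+1} ≤ (1 − c/k)w_k + c₁/k^{s+1}` with `c > s > 0`, `c₁ > 0`,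
then `limsup_k k^s·w_k ≤ c₁/(c − s)`, i.e. `w_k ≤ c₁(c−s)⁻¹k^{−s} + o(k^{−s})`. -/
theorem chung_lemma (w : ℕ → ℝ) (hw : ∀ k, 0 ≤ w k)
    (c s c₁ : ℝ) (hs : 0 < s) (hcs : s < c) (hc₁ : 0 < c₁)
    (hrec : ∀ k : ℕ, 1 ≤ k →
      w (k + 1) ≤ (1 - c / k) * w k + c₁ / (k : ℝ) ^ (s + 1)) :
    Filter.limsup (fun k : ℕ => (k : ℝ) ^ s * w k) Filter.atTop ≤ c₁ / (c - s) := by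
  set α := c - s with hαdef
  have hα0 : 0 < α := sub_pos.2 hcs
  set v : ℕ → ℝ := fun k => (k : ℝ) ^ s * w k with hvdef
  have hv0 : ∀ k, 0 ≤ v k := fun k =>
    mul_nonneg (Real.rpow_nonneg (Nat.cast_nonneg k) s) (hw k)
  -- recursion for v
  have hstep : ∀ k : ℕ, 1 ≤ k → v (k + 1) ≤
      (1 + 1 / (k:ℝ)) ^ s * (1 - c / (k:ℝ)) * v k + c₁ * (1 + 1 / (k:ℝ)) ^ s / k := by
    intro k hk
    have hk0 : (0:ℝ) < (k:ℝ) := by exact_mod_cast hk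
    have hks : (0:ℝ) < (k:ℝ) ^ s := Real.rpow_pos_of_pos hk0 s
    have h1 : ((k + 1 : ℕ) : ℝ) ^ s = (k:ℝ) ^ s * (1 + 1 / (k:ℝ)) ^ s := by
      rw [← Real.mul_rpow (le_of_lt hk0) (by positivity)]
      congr 1
      field_simp
      push_cast
      rfl
    have h2 : v (k + 1) ≤ ((k+1:ℕ):ℝ) ^ s * ((1 - c / k) * w k + c₁ / (k : ℝ) ^ (s + 1)) :=
      mul_le_mul_of_nonneg_left (hrec k hk) (Real.rpow_nonneg (Nat.cast_nonneg _) s)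
    refine h2.trans (le_of_eq ?_)
    rw [h1, Real.rpow_add hk0, Real.rpow_one]
    have hks' : ((k:ℝ) ^ s) ≠ 0 := ne_of_gt hks
    field_simp
    ring
  -- key estimate for each ε
  have key : ∀ ε : ℝ, 0 < ε → ε < α →
      limsup v atTop ≤ (c₁ + ε) / (α - ε) + ε := by
    intro ε hε hεα
    set β := α - ε with hβdef
    have hβ0 : 0 < β := sub_pos.2 hεα
    set B := (c₁ + ε) / β with hBdef
    have hBmul : β * B = c₁ + ε := by
      rw [hBdef]; field_simp
    -- eventual coefficient bound
    have hev1 : ∀ᶠ k : ℕ in atTop,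
        (1 + 1 / (k:ℝ)) ^ s * (1 - c / (k:ℝ)) ≤ 1 - β / k := by
      have hlt : ∀ᶠ k : ℕ in atTop,
          (k:ℝ) * ((1 + 1 / (k:ℝ)) ^ s * (1 - c / (k:ℝ)) - 1) < -β :=
        (chung_aux_lim s c).eventually_lt_const (by simp only [hβdef, hαdef]; linarith)
      filter_upwards [hlt, eventually_ge_atTop 1] with k h hk
      have hk0 : (0:ℝ) < (k:ℝ) := by exact_mod_cast hk
      have h2 : (1 + 1 / (k:ℝ)) ^ s * (1 - c / (k:ℝ)) - 1 < -β / k := by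
        rw [lt_div_iff₀ hk0]
        linarith [mul_comm ((1 + 1 / (k:ℝ)) ^ s * (1 - c / (k:ℝ)) - 1) (k:ℝ)]
      have : -β / (k:ℝ) = -(β / k) := by ring
      linarith [this ▸ h2]
    have hev2 : ∀ᶠ k : ℕ in atTop, c₁ * (1 + 1 / (k:ℝ)) ^ s ≤ c₁ + ε := by
      have hl1 : Tendsto (fun k : ℕ => 1 + 1 / (k:ℝ)) atTop (nhds 1) := by
        have := tendsto_one_div_atTop_nhds_zero_nat (𝕜 := ℝ)
        simpa using (this.const_add 1)
      have hl2 : Tendsto (fun k : ℕ => c₁ * (1 + 1 / (k:ℝ)) ^ s) atTop (nhds c₁) := by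
        have hc : ContinuousAt (fun x : ℝ => x ^ s) 1 :=
          Real.continuousAt_rpow_const 1 s (Or.inl one_ne_zero)
        have := (hc.tendsto.comp hl1).const_mul c₁
        simpa [Real.one_rpow] using this
      exact hl2.eventually_le_const (by linarith)
    have hev3 : ∀ᶠ k : ℕ in atTop, β < (k:ℝ) :=
      tendsto_natCast_atTop_atTop.eventually_gt_atTop β
    obtain ⟨K, hK⟩ := eventually_atTop.1
      ((hev1.and (hev2.and hev3)).and (eventually_ge_atTop 1))
    -- contraction of u := v - B
    have hstep2 : ∀ k : ℕ, K ≤ k → v (k+1) - B ≤ (1 - β / (k:ℝ)) * (v k - B) := by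
      intro k hk
      obtain ⟨⟨h1, h2, h3⟩, h4⟩ := hK k hk
      have hk0 : (0:ℝ) < (k:ℝ) := by exact_mod_cast h4
      have hA : v (k+1) ≤ (1 - β / k) * v k + (c₁ + ε) / k := by
        have hs1 := hstep k h4
        have hs2 : (1 + 1 / (k:ℝ)) ^ s * (1 - c / (k:ℝ)) * v k ≤ (1 - β / k) * v k :=
          mul_le_mul_of_nonneg_right h1 (hv0 k)
        have hs3 : c₁ * (1 + 1 / (k:ℝ)) ^ s / k ≤ (c₁ + ε) / k :=
          (div_le_div_iff_of_pos_right hk0).2 h2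
        linarith
      have hexp : (1 - β / (k:ℝ)) * (v k - B) = (1 - β / k) * v k - B + β / k * B := by
        ring
      have hBk : β / (k:ℝ) * B = (c₁ + ε) / k := by
        rw [div_mul_eq_mul_div, hBmul]
      linarith [hexp, hBk]
    -- positive part decay
    set p : ℕ → ℝ := fun k => max (v k - B) 0 with hpdef
    have hp0 : ∀ k, 0 ≤ p k := fun k => le_max_right _ _
    have hpstep : ∀ k : ℕ, K ≤ k → p (k+1) ≤ Real.exp (-(β / k)) * p k := by
      intro k hk
      obtain ⟨⟨h1, h2, h3⟩, h4⟩ := hK k hk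
      have hk0 : (0:ℝ) < (k:ℝ) := by exact_mod_cast h4
      have hθ0 : 0 ≤ 1 - β / (k:ℝ) := by
        have : β / (k:ℝ) ≤ 1 := (div_le_one hk0).2 (le_of_lt h3)
        linarith
      have hm1 : p (k+1) ≤ (1 - β / (k:ℝ)) * p k := by
        have : v (k+1) - B ≤ (1 - β / (k:ℝ)) * p k :=
          (hstep2 k hk).trans (mul_le_mul_of_nonneg_left (le_max_left _ _) hθ0)
        exact max_le this (mul_nonneg hθ0 (hp0 k))
      have hm2 : (1 - β / (k:ℝ)) ≤ Real.exp (-(β / k)) := by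
        have := Real.add_one_le_exp (-(β / (k:ℝ)))
        linarith
      exact hm1.trans (mul_le_mul_of_nonneg_right hm2 (hp0 k))
    -- harmonic sums
    set S : ℕ → ℝ := fun m => ∑ j ∈ Finset.range m, 1 / (j:ℝ) with hSdef
    have hSsucc : ∀ m : ℕ, S (m+1) = S m + 1 / (m:ℝ) := by
      intro m; rw [hSdef]; exact Finset.sum_range_succ _ m
    have hSind : ∀ m : ℕ, K ≤ m → p m ≤ Real.exp (-β * (S m - S K)) * p K := by
      intro m hm
      induction m, hm using Nat.le_induction with
      | base => simp
      | succ m hm ih =>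
        have h1 := hpstep m hm
        have h2 : Real.exp (-(β / m)) * p m ≤
            Real.exp (-(β / m)) * (Real.exp (-β * (S m - S K)) * p K) :=
          mul_le_mul_of_nonneg_left ih (le_of_lt (Real.exp_pos _))
        refine (h1.trans h2).trans (le_of_eq ?_)
        rw [← mul_assoc, ← Real.exp_add, hSsucc m]
        congr 2
        ring
    have hSdiv : Tendsto S atTop atTop := by
      have h0 := Real.tendsto_sum_range_one_div_nat_succ_atTop
      have heq : ∀ n : ℕ, S (n+1) = ∑ i ∈ Finset.range n, 1 / ((i:ℝ) + 1) := by
        intro n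
        show (∑ j ∈ Finset.range (n+1), 1 / (j:ℝ)) = _
        rw [Finset.sum_range_succ']
        push_cast
        simp
      have h1 : Tendsto (fun n => S (n+1)) atTop atTop := by
        refine h0.congr fun n => (heq n).symm
      exact (tendsto_add_atTop_iff_nat 1).1 h1
    have hbt : Tendsto (fun m => Real.exp (-β * (S m - S K)) * p K) atTop (nhds 0) := by
      have h1 : Tendsto (fun m => S m - S K) atTop atTop :=
        tendsto_atTop_add_const_right atTop (-(S K)) hSdiv
      have h2 : Tendsto (fun m => β * (S m - S K)) atTop atTop :=
        h1.const_mul_atTop hβ0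
      have h3 : Tendsto (fun m => -β * (S m - S K)) atTop atBot := by
        have := tendsto_neg_atTop_atBot.comp h2
        refine this.congr fun m => by simp [Function.comp]
      have h4 : Tendsto (fun m => Real.exp (-β * (S m - S K))) atTop (nhds 0) :=
        Real.tendsto_exp_atBot.comp h3
      simpa using h4.mul_const (p K)
    have hptend : Tendsto p atTop (nhds 0) := by
      refine tendsto_of_tendsto_of_tendsto_of_le_of_le' tendsto_const_nhds hbt
        (Eventually.of_forall hp0) ?_
      filter_upwards [eventually_ge_atTop K] with m hm
      exact hSind m hm
    have hevfin : ∀ᶠ m : ℕ in atTop, v m ≤ B + ε := by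
      filter_upwards [hptend.eventually_le_const hε] with m hm
      have : v m - B ≤ p m := le_max_left _ _
      linarith
    exact limsup_le_of_le (isCoboundedUnder_le_of_le atTop hv0) hevfin
  -- pass to the limit ε → 0⁺
  have hcont : Tendsto (fun ε : ℝ => (c₁ + ε) / (α - ε) + ε)
      (nhdsWithin 0 (Set.Ioi 0)) (nhds (c₁ / α)) := by
    have h1 : ContinuousAt (fun ε : ℝ => (c₁ + ε) / (α - ε) + ε) 0 := by
      apply ContinuousAt.add
      · exact ContinuousAt.div (by fun_prop) (by fun_prop) (by simpa using hα0.ne')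
      · exact continuousAt_id
    have := h1.tendsto.mono_left (nhdsWithin_le_nhds (s := Set.Ioi 0))
    simpa using this
  refine ge_of_tendsto hcont ?_
  filter_upwards [Ioo_mem_nhdsGT_of_mem ⟨le_refl (0:ℝ), hα0⟩] with ε hε
  exact key ε hε.1 hε.2
end

section
/- For φ(x) = x·ln(x) on ℝ_{++} (Boltzmann–Shannon entropy), there is no constant κ ≥ 0 such that √2·|√(φ''(x)) − √(φ''(x'))| ≤ κ|φ'(x) − φ'(x')| for all x, x' > 0; i.e., condition (A1) fails. -/
/-- For the Boltzmann–Shannon entropy `φ(x) = x·ln x` on `ℝ₊₊` (so `φ'(x) = ln x + 1`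
and `φ''(x) = 1/x`), condition (A1) fails: there is no `κ ≥ 0` with
`√2·|√(φ''(x)) − √(φ''(x'))| ≤ κ·|φ'(x) − φ'(x')|` for all `x, x' > 0`. -/
theorem shannon_entropy_A1_fails :
    ¬ ∃ κ : ℝ, 0 ≤ κ ∧ ∀ x x' : ℝ, 0 < x → 0 < x' →
      Real.sqrt 2 * |Real.sqrt (1 / x) - Real.sqrt (1 / x')| ≤
        κ * |(Real.log x + 1) - (Real.log x' + 1)| := by
  rintro ⟨κ, hκ, h⟩
  have hse : Real.sqrt (1 / Real.exp 1) < 1 := by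
    rw [Real.sqrt_lt' one_pos, one_pow, div_lt_one (Real.exp_pos 1)]
    exact Real.one_lt_exp_iff.mpr one_pos
  set c : ℝ := Real.sqrt 2 * (1 - Real.sqrt (1 / Real.exp 1)) with hc
  have hcpos : 0 < c := by
    apply mul_pos (Real.sqrt_pos.mpr (by norm_num))
    linarith
  -- key estimate: for all t > 0, c * √(1/t) ≤ κ
  have key : ∀ t : ℝ, 0 < t → c * Real.sqrt (1 / t) ≤ κ := by
    intro t ht
    have h' := h t (t * Real.exp 1) ht (by positivity)
    have hlog : Real.log (t * Real.exp 1) = Real.log t + 1 := by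
      rw [Real.log_mul (ne_of_gt ht) (Real.exp_ne_zero 1), Real.log_exp]
    rw [hlog] at h'
    have habs : |Real.log t + 1 - (Real.log t + 1 + 1)| = 1 := by
      rw [show Real.log t + 1 - (Real.log t + 1 + 1) = -1 by ring]; simp
    rw [habs, mul_one] at h'
    have hsplit : Real.sqrt (1 / (t * Real.exp 1)) =
        Real.sqrt (1 / t) * Real.sqrt (1 / Real.exp 1) := by
      rw [← Real.sqrt_mul (by positivity)]
      congr 1
      field_simp
    rw [hsplit] at h'
    have hnn : 0 ≤ Real.sqrt (1 / t) - Real.sqrt (1 / t) * Real.sqrt (1 / Real.exp 1) := by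
      nlinarith [Real.sqrt_nonneg (1 / t)]
    rw [abs_of_nonneg hnn] at h'
    calc c * Real.sqrt (1 / t)
        = Real.sqrt 2 * (Real.sqrt (1 / t) - Real.sqrt (1 / t) * Real.sqrt (1 / Real.exp 1)) := by
          rw [hc]; ring
      _ ≤ κ := h'
  -- contradiction: take t = (c/(κ+1))², so √(1/t) = (κ+1)/c
  have hr : 0 < (κ + 1) / c := by positivity
  have := key (1 / ((κ + 1) / c) ^ 2) (by positivity)
  rw [one_div_one_div, Real.sqrt_sq hr.le] at this
  rw [mul_div_cancel₀ _ (ne_of_gt hcpos)] at this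
  linarith
end

section
/- In dimension one, for a C³ strictly convex function φ : I → ℝ on an open interval I, the condition √2·|√(φ''(x)) − √(φ''(x'))| ≤ κ|φ'(x) − φ'(x')| for all x, x' ∈ I holds for some κ ≥ 0 if and only if there exists c ≥ 0 such that |φ'''(x)| ≤ c·φ''(x)^{3/2} for all x ∈ I (self-concordance with parameter c). -/
open Filter Set Topology

/-- In dimension one, for a `C³` strictly convex `φ` on an open interval `I` (with
`φ'' > 0`), condition (A1), i.e.
`√2·|√(φ''(x)) − √(φ''(x'))| ≤ κ·|φ'(x) − φ'(x')|` for some `κ ≥ 0`,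
holds if and only if `φ` is self-concordant-like: `|φ'''(x)| ≤ c·φ''(x)^{3/2}` on `I`
for some `c ≥ 0`. -/
theorem A1_iff_self_concordance_1d
    (I : Set ℝ) (hIo : IsOpen I) (hIc : Convex ℝ I) (hIne : I.Nonempty)
    (φ : ℝ → ℝ) (hφ : ContDiffOn ℝ 3 φ I)
    (hpos : ∀ x ∈ I, 0 < deriv (deriv φ) x) :
    (∃ κ : ℝ, 0 ≤ κ ∧ ∀ x ∈ I, ∀ x' ∈ I,
      Real.sqrt 2 * |Real.sqrt (deriv (deriv φ) x) - Real.sqrt (deriv (deriv φ) x')| ≤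
        κ * |deriv φ x - deriv φ x'|) ↔
    (∃ c : ℝ, 0 ≤ c ∧ ∀ x ∈ I,
      |deriv (deriv (deriv φ)) x| ≤ c * (deriv (deriv φ) x) ^ ((3 : ℝ) / 2)) := by
  set f := deriv φ with hfdef
  set g := deriv (deriv φ) with hgdef
  set h : ℝ → ℝ := fun x => Real.sqrt (g x) with hhdef
  have hf2 : ContDiffOn ℝ 2 f I := hφ.deriv_of_isOpen hIo (by norm_num)
  have hg1 : ContDiffOn ℝ 1 g I := hf2.deriv_of_isOpen hIo (by norm_num)
  have hdf : ∀ x ∈ I, HasDerivAt f (g x) x := by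
    intro x hx
    exact ((hf2.differentiableOn (by norm_num)).differentiableAt
      (hIo.mem_nhds hx)).hasDerivAt
  have hdg : ∀ x ∈ I, HasDerivAt g (deriv g x) x := by
    intro x hx
    exact ((hg1.differentiableOn (by norm_num)).differentiableAt
      (hIo.mem_nhds hx)).hasDerivAt
  have hdh : ∀ x ∈ I, HasDerivAt h (deriv g x / (2 * Real.sqrt (g x))) x := by
    intro x hx
    exact (hdg x hx).sqrt (ne_of_gt (hpos x hx))
  have hr : ∀ x ∈ I, (g x) ^ ((3 : ℝ) / 2) = g x * Real.sqrt (g x) := by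
    intro x hx
    have h0 : (0 : ℝ) < g x := hpos x hx
    rw [show (3 : ℝ) / 2 = 1 + 1 / 2 by norm_num, Real.rpow_add h0, Real.rpow_one,
      Real.sqrt_eq_rpow]
  have hs2 : (0 : ℝ) < Real.sqrt 2 := Real.sqrt_pos.mpr (by norm_num)
  have hs2sq : Real.sqrt 2 * Real.sqrt 2 = 2 := Real.mul_self_sqrt (by norm_num)
  constructor
  · rintro ⟨κ, hκ, hA⟩
    refine ⟨Real.sqrt 2 * κ, by positivity, fun x hx => ?_⟩
    have hsx : 0 < Real.sqrt (g x) := Real.sqrt_pos.mpr (hpos x hx)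
    have hsl_h : Tendsto (slope h x) (𝓝[≠] x) (𝓝 (deriv g x / (2 * Real.sqrt (g x)))) :=
      hasDerivAt_iff_tendsto_slope.mp (hdh x hx)
    have hsl_f : Tendsto (slope f x) (𝓝[≠] x) (𝓝 (g x)) :=
      hasDerivAt_iff_tendsto_slope.mp (hdf x hx)
    have key : Real.sqrt 2 * |deriv g x / (2 * Real.sqrt (g x))| ≤ κ * |g x| := by
      have h1 : Tendsto (fun y => Real.sqrt 2 * |slope h x y|) (𝓝[≠] x)
          (𝓝 (Real.sqrt 2 * |deriv g x / (2 * Real.sqrt (g x))|)) :=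
        (hsl_h.abs).const_mul _
      have h2 : Tendsto (fun y => κ * |slope f x y|) (𝓝[≠] x) (𝓝 (κ * |g x|)) :=
        (hsl_f.abs).const_mul _
      refine le_of_tendsto_of_tendsto h1 h2 ?_
      have hev : ∀ᶠ y in 𝓝[≠] x, y ∈ I :=
        eventually_nhdsWithin_of_eventually_nhds (hIo.eventually_mem hx)
      filter_upwards [hev, self_mem_nhdsWithin] with y hyI hyne
      have hne : y ≠ x := hyne
      have hyx : (0 : ℝ) < |y - x| := abs_pos.mpr (sub_ne_zero.mpr hne)
      have hAy := hA y hyI x hx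
      rw [slope_def_field, slope_def_field, abs_div, abs_div,
        ← mul_div_assoc, ← mul_div_assoc, div_le_div_iff₀ hyx hyx]
      have : Real.sqrt 2 * |h y - h x| ≤ κ * |f y - f x| := by
        simpa [hhdef, abs_sub_comm] using hAy
      nlinarith [abs_nonneg (h y - h x), abs_nonneg (f y - f x)]
    rw [abs_div, abs_of_pos (by positivity : (0 : ℝ) < 2 * Real.sqrt (g x)),
      abs_of_pos (hpos x hx)] at key
    rw [hr x hx]
    have key' : Real.sqrt 2 * |deriv g x| ≤ κ * g x * (2 * Real.sqrt (g x)) := by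
      rw [← mul_div_assoc, div_le_iff₀ (by positivity)] at key
      linarith
    have key'' : 2 * |deriv g x| ≤ Real.sqrt 2 * (κ * g x * (2 * Real.sqrt (g x))) := by
      calc 2 * |deriv g x| = Real.sqrt 2 * Real.sqrt 2 * |deriv g x| := by rw [hs2sq]
        _ = Real.sqrt 2 * (Real.sqrt 2 * |deriv g x|) := by ring
        _ ≤ _ := mul_le_mul_of_nonneg_left key' hs2.le
    linarith
  · rintro ⟨c, hc, hB⟩
    refine ⟨Real.sqrt 2 * c / 2, by positivity, ?_⟩
    have claim : ∀ a ∈ I, ∀ b ∈ I, a ≤ b → |h b - h a| ≤ c / 2 * (f b - f a) := by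
      have hbound : ∀ t ∈ I, |deriv g t / (2 * Real.sqrt (g t))| ≤ c / 2 * g t := by
        intro t ht
        have hst : 0 < Real.sqrt (g t) := Real.sqrt_pos.mpr (hpos t ht)
        have hBt := hB t ht
        rw [hr t ht] at hBt
        rw [abs_div, abs_of_pos (by positivity : (0 : ℝ) < 2 * Real.sqrt (g t)),
          div_le_iff₀ (by positivity)]
        nlinarith [hpos t ht, abs_nonneg (deriv g t)]
      have hcont : ∀ t ∈ I, ContinuousAt h t := fun t ht => (hdh t ht).continuousAt
      have mono : ∀ ε : ℝ, ε = 1 ∨ ε = -1 →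
          MonotoneOn (fun t => c / 2 * f t + ε * h t) I := by
        intro ε hε
        have hd : ∀ t ∈ I, HasDerivAt (fun t => c / 2 * f t + ε * h t)
            (c / 2 * g t + ε * (deriv g t / (2 * Real.sqrt (g t)))) t := by
          intro t ht
          exact ((hdf t ht).const_mul (c / 2)).add ((hdh t ht).const_mul ε)
        refine monotoneOn_of_deriv_nonneg hIc ?_ ?_ ?_
        · exact fun t ht => ((hd t ht).continuousAt).continuousWithinAt
        · rw [hIo.interior_eq]
          exact fun t ht => ((hd t ht).differentiableAt).differentiableWithinAt
        · rw [hIo.interior_eq]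
          intro t ht
          rw [(hd t ht).deriv]
          have := hbound t ht
          rcases hε with rfl | rfl
          · have := neg_abs_le (deriv g t / (2 * Real.sqrt (g t)))
            linarith
          · have := le_abs_self (deriv g t / (2 * Real.sqrt (g t)))
            linarith
      intro a ha b hb hab
      have m1 := (mono 1 (Or.inl rfl)) ha hb hab
      have m2 := (mono (-1) (Or.inr rfl)) ha hb hab
      simp only at m1 m2
      rw [abs_le]
      constructor <;> linarith
    intro x hx x' hx'
    have main : ∀ a ∈ I, ∀ b ∈ I, a ≤ b →
        Real.sqrt 2 * |Real.sqrt (g a) - Real.sqrt (g b)| ≤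
          Real.sqrt 2 * c / 2 * |f a - f b| := by
      intro a ha b hb hab
      have h1 := claim a ha b hb hab
      have h2 : f b - f a ≤ |f a - f b| := by
        rw [abs_sub_comm]; exact le_abs_self _
      have h3 : |Real.sqrt (g a) - Real.sqrt (g b)| = |h b - h a| := by
        rw [abs_sub_comm]
      rw [h3]
      have : |h b - h a| ≤ c / 2 * |f a - f b| := by
        nlinarith [abs_nonneg (h b - h a)]
      nlinarith [abs_nonneg (h b - h a), abs_nonneg (f a - f b)]
    rcases le_total x x' with hxx | hxx
    · exact main x hx x' hx' hxx
    · have := main x' hx' x hx hxx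
      rwa [abs_sub_comm (Real.sqrt (g x')) _, abs_sub_comm (f x') _] at this
end
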